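/- arXiv:math/0603529 — 5 statements merged into one kernel-verified Lean document; each statement's English description precedes it below -/
import Mathlib

section
/- For m ≥ 2 fixed and k = ⌊x√n⌋ with x > 0 fixed, the quantity (k/(n-k))·m^k·(m-1)·C(nm-k-1, n-k-1)/C(nm, n) is asymptotic to ((m-1)/m)·x·exp(-(m-1)x²/(2m))·(1/√n) as n → ∞. -/
/-!
Multiplying the binomial ratio by `m ^ (k + 1)` telescopes it into
`∏_{j ≤ k} (1 - j/n) / (1 - j/(nm))`. When `k ~ x √n`, each `log (1 - a j/n)` equals `-a j/n`
up to `O(k²/n²)`, so `∏_{j ≤ k} (1 - a j/n) → exp (-a x²/2)`; the cases `a = 1` and `a = 1/m`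
produce the Gaussian factor, and `k/(n - k) ~ x/√n` the rest.
-/

open Filter Finset Real Topology

lemma abs_log_one_sub_add_le {t : ℝ} (h0 : 0 ≤ t) (h1 : t ≤ 1 / 2) :
    |log (1 - t) + t| ≤ 2 * t ^ 2 := by
  have h := abs_log_sub_add_sum_range_le (x := t) (by rw [abs_of_nonneg h0]; linarith) 1
  rw [abs_of_nonneg h0] at h
  calc |log (1 - t) + t| = |t + log (1 - t)| := by rw [add_comm]
    _ ≤ t ^ 2 / (1 - t) := by simpa using h
    _ ≤ 2 * t ^ 2 := by rw [div_le_iff₀ (by linarith)]; nlinarith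

lemma sum_range_succ_natCast (K : ℕ) : ∑ j ∈ range (K + 1), (j : ℝ) = K * (K + 1) / 2 := by
  induction K with
  | zero => simp
  | succ K ih => rw [sum_range_succ, ih]; push_cast; ring

lemma Nat.choose_sub_mul_descFactorial {N n j : ℕ} (hj : j ≤ n) :
    (N - j).choose (n - j) * N.descFactorial j = N.choose n * n.descFactorial j := by
  rw [Nat.descFactorial_eq_factorial_mul_choose, Nat.descFactorial_eq_factorial_mul_choose,
    mul_left_comm (N.choose n), Nat.choose_mul hj]
  ring

lemma cast_descFactorial_eq_prod_range {R : Type*} [CommRing R] {n j : ℕ} (hj : j ≤ n) :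
    (n.descFactorial j : R) = ∏ i ∈ range j, ((n : R) - i) := by
  rw [Nat.descFactorial_eq_prod_range, Nat.cast_prod]
  exact prod_congr rfl fun i hi => Nat.cast_sub (by have := mem_range.1 hi; omega)

lemma choose_sub_div_choose_eq_prod {K : Type*} [Field K] [CharZero K] {N n j : ℕ}
    (hj : j ≤ n) (hn : n ≤ N) :
    ((N - j).choose (n - j) : K) / N.choose n = ∏ i ∈ range j, ((n : K) - i) / (N - i) := by
  have hC : (N.choose n : K) ≠ 0 := Nat.cast_ne_zero.2 (Nat.choose_pos hn).ne'
  have hD : (N.descFactorial j : K) ≠ 0 :=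
    Nat.cast_ne_zero.2 (by rw [Ne, Nat.descFactorial_eq_zero_iff_lt]; omega)
  rw [prod_div_distrib, ← cast_descFactorial_eq_prod_range hj,
    ← cast_descFactorial_eq_prod_range (hj.trans hn), div_eq_div_iff hC hD]
  exact_mod_cast (Nat.choose_sub_mul_descFactorial (N := N) hj).trans (mul_comm _ _)

section SqrtScale

variable {k : ℕ → ℕ} {x : ℝ}

lemma tendsto_inv_sqrt_natCast : Tendsto (fun n : ℕ => (√n)⁻¹) atTop (𝓝 0) :=
  tendsto_inv_atTop_zero.comp (tendsto_sqrt_atTop.comp tendsto_natCast_atTop_atTop)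

lemma tendsto_div_of_tendsto_div_sqrt (hk : Tendsto (fun n => (k n : ℝ) / √n) atTop (𝓝 x)) :
    Tendsto (fun n => (k n : ℝ) / n) atTop (𝓝 0) := by
  refine (mul_zero x ▸ hk.mul tendsto_inv_sqrt_natCast).congr fun n => ?_
  rw [← div_eq_mul_inv, div_div, mul_self_sqrt n.cast_nonneg]

lemma tendsto_mul_succ_div_of_tendsto_div_sqrt
    (hk : Tendsto (fun n => (k n : ℝ) / √n) atTop (𝓝 x)) :
    Tendsto (fun n => (k n : ℝ) * (k n + 1) / n) atTop (𝓝 (x ^ 2)) := by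
  have h := hk.mul (add_zero x ▸ hk.add tendsto_inv_sqrt_natCast)
  refine (sq x ▸ h).congr fun n => ?_
  calc (k n : ℝ) / √n * (k n / √n + (√n)⁻¹) = k n * (k n + 1) / (√n * √n) := by ring
    _ = k n * (k n + 1) / n := by rw [mul_self_sqrt n.cast_nonneg]

lemma eventually_two_mul_succ_le_of_tendsto_div_sqrt
    (hk : Tendsto (fun n => (k n : ℝ) / √n) atTop (𝓝 x)) :
    ∀ᶠ n in atTop, 2 * (k n + 1) ≤ n := by
  have h : Tendsto (fun n : ℕ => 2 * ((k n : ℝ) / n) + 2 * (1 / (n : ℝ))) atTop (𝓝 0) := by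
    simpa using ((tendsto_div_of_tendsto_div_sqrt hk).const_mul 2).add
      (tendsto_one_div_atTop_nhds_zero_nat.const_mul 2)
  filter_upwards [h.eventually_lt_const one_pos, eventually_ge_atTop 1] with n hn hn1
  have hn0 : (0 : ℝ) < n := by exact_mod_cast hn1
  rw [← mul_add, ← add_div, mul_div_assoc', div_lt_one hn0] at hn
  exact_mod_cast hn.le

lemma tendsto_sum_log_one_sub_mul_div (hk : Tendsto (fun n => (k n : ℝ) / √n) atTop (𝓝 x))
    {a : ℝ} (ha0 : 0 ≤ a) (ha1 : a ≤ 1) :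
    Tendsto (fun n : ℕ => ∑ j ∈ range (k n + 1), log (1 - a * j / n)) atTop
      (𝓝 (-(a * x ^ 2 / 2))) := by
  set E : ℕ → ℝ := fun n => ∑ j ∈ range (k n + 1), (log (1 - a * j / n) + a * j / n)
  have hsplit : ∀ n, ∑ j ∈ range (k n + 1), log (1 - a * j / n)
      = E n - a / 2 * ((k n : ℝ) * (k n + 1) / n) := by
    intro n
    have hlin : ∑ j ∈ range (k n + 1), a * (j : ℝ) / n = a / 2 * ((k n : ℝ) * (k n + 1) / n) := by
      simp_rw [mul_div_assoc, ← mul_sum, ← sum_div, sum_range_succ_natCast]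
      ring
    rw [← hlin, ← sum_sub_distrib]
    simp only [add_sub_cancel_right]
  have hbound : ∀ᶠ n in atTop, ‖E n‖ ≤ 2 * ((k n : ℝ) * (k n + 1) / n * ((k n : ℝ) / n)) := by
    filter_upwards [eventually_two_mul_succ_le_of_tendsto_div_sqrt hk] with n hn
    have hn0 : (0 : ℝ) < n := by exact_mod_cast (by omega : 0 < n)
    have hkn : (k n : ℝ) / n ≤ 1 / 2 := by
      rw [div_le_div_iff₀ hn0 two_pos]; exact_mod_cast (by omega : k n * 2 ≤ 1 * n)
    have hterm : ∀ j ∈ range (k n + 1),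
        |log (1 - a * j / n) + a * j / n| ≤ 2 * ((k n : ℝ) / n) ^ 2 := by
      intro j hj
      have hjk : (j : ℝ) ≤ k n := by exact_mod_cast Nat.lt_succ_iff.1 (mem_range.1 hj)
      have h0 : 0 ≤ a * j / n := by positivity
      have h1 : a * j / n ≤ k n / n := by gcongr; nlinarith
      calc _ ≤ 2 * (a * j / n) ^ 2 := abs_log_one_sub_add_le h0 (h1.trans hkn)
        _ ≤ 2 * ((k n : ℝ) / n) ^ 2 := by gcongr
    calc ‖E n‖ ≤ ∑ j ∈ range (k n + 1), |log (1 - a * j / n) + a * j / n| :=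
          abs_sum_le_sum_abs _ _
      _ ≤ ∑ _j ∈ range (k n + 1), 2 * ((k n : ℝ) / n) ^ 2 := sum_le_sum hterm
      _ = _ := by rw [sum_const, card_range, nsmul_eq_mul]; push_cast; ring
  have hE : Tendsto E atTop (𝓝 0) := squeeze_zero_norm' hbound <| by
    simpa using ((tendsto_mul_succ_div_of_tendsto_div_sqrt hk).mul
      (tendsto_div_of_tendsto_div_sqrt hk)).const_mul 2
  have h := hE.sub ((tendsto_mul_succ_div_of_tendsto_div_sqrt hk).const_mul (a / 2))
  refine Tendsto.congr (fun n => (hsplit n).symm) ?_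
  convert h using 2
  ring

lemma tendsto_prod_one_sub_mul_div (hk : Tendsto (fun n => (k n : ℝ) / √n) atTop (𝓝 x))
    {a : ℝ} (ha0 : 0 ≤ a) (ha1 : a ≤ 1) :
    Tendsto (fun n : ℕ => ∏ j ∈ range (k n + 1), (1 - a * j / n)) atTop
      (𝓝 (exp (-(a * x ^ 2 / 2)))) := by
  refine ((continuous_exp.tendsto _).comp (tendsto_sum_log_one_sub_mul_div hk ha0 ha1)).congr' ?_
  filter_upwards [eventually_two_mul_succ_le_of_tendsto_div_sqrt hk] with n hn
  rw [Function.comp_apply, exp_sum]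
  refine prod_congr rfl fun j hj => exp_log ?_
  have hn0 : (0 : ℝ) < n := by exact_mod_cast (by omega : 0 < n)
  have hjn : (j : ℝ) < n := by exact_mod_cast (by have := mem_range.1 hj; omega : j < n)
  rw [sub_pos, div_lt_one hn0]
  nlinarith

end SqrtScale

-- The factor `1 *` matches `tendsto_prod_one_sub_mul_div` at `a = 1`.
lemma choose_div_choose_eq_prod_div_pow {m n K : ℕ} (hm : 1 ≤ m) (hK : K + 1 ≤ n) :
    ((n * m - K - 1).choose (n - K - 1) : ℝ) / (n * m).choose n
      = (∏ j ∈ range (K + 1), (1 - 1 * j / n : ℝ))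
          / (∏ j ∈ range (K + 1), (1 - (m : ℝ)⁻¹ * j / n)) / (m : ℝ) ^ (K + 1) := by
  have hn0 : (0 : ℝ) < n := by exact_mod_cast (by omega : 0 < n)
  have hm0 : (0 : ℝ) < m := by exact_mod_cast hm
  rw [Nat.sub_sub, Nat.sub_sub, choose_sub_div_choose_eq_prod hK (Nat.le_mul_of_pos_right n hm),
    ← prod_div_distrib, eq_div_iff (by positivity),
    show (m : ℝ) ^ (K + 1) = ∏ _j ∈ range (K + 1), (m : ℝ) by simp, ← prod_mul_distrib]
  refine prod_congr rfl fun j hj => ?_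
  have hjn : (j : ℝ) < n := by exact_mod_cast (by have := mem_range.1 hj; omega : j < n)
  have hjnm : (j : ℝ) < n * m :=
    hjn.trans_le (le_mul_of_one_le_right hn0.le (by exact_mod_cast hm))
  have hnmj : (n : ℝ) * m - j ≠ 0 := (sub_pos.2 hjnm).ne'
  rw [Nat.cast_mul]
  field_simp

lemma tendsto_natFloor_mul_sqrt_div_sqrt {x : ℝ} (hx : 0 < x) :
    Tendsto (fun n : ℕ => (⌊x * √n⌋₊ : ℝ) / √n) atTop (𝓝 x) := by
  have h := (tendsto_nat_floor_div_atTop.comp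
    ((tendsto_sqrt_atTop.comp tendsto_natCast_atTop_atTop).const_mul_atTop hx)).mul_const x
  rw [one_mul] at h
  refine h.congr fun n => ?_
  rcases eq_or_ne (√n) 0 with hs | hs
  · simp [hs]
  · simp only [Function.comp_apply]
    field_simp

/-- For `m ≥ 2` fixed and `k = ⌊x √n⌋` with `x > 0` fixed, the quantity
`(k/(n-k)) m^k (m-1) C(nm-k-1, n-k-1) / C(nm, n)` is asymptotic to
`((m-1)/m) x exp(-(m-1)x²/(2m)) / √n` as `n → ∞`. -/
theorem stmt6 (m : ℕ) (hm : 2 ≤ m) (x : ℝ) (hx : 0 < x) :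
    Tendsto (fun n : ℕ =>
        ((fun k : ℕ =>
          ((k : ℝ) / ((n : ℝ) - k) * (m : ℝ) ^ k * ((m : ℝ) - 1) *
              ((n * m - k - 1).choose (n - k - 1) : ℝ) / ((n * m).choose n : ℝ)) /
            (((m : ℝ) - 1) / m * x *
              Real.exp (-(((m : ℝ) - 1) * x ^ 2) / (2 * m)) / Real.sqrt n))) ⌊x * Real.sqrt n⌋₊)
      atTop (nhds 1) := by
  have hm1 : (1 : ℝ) < m := by exact_mod_cast hm
  set E := exp (-(((m : ℝ) - 1) * x ^ 2) / (2 * m))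
  have hE0 : E ≠ 0 := (exp_pos _).ne'
  have hk := tendsto_natFloor_mul_sqrt_div_sqrt hx
  have hscale := (hk.div_const x).div
    ((tendsto_const_nhds (x := (1 : ℝ))).sub (tendsto_div_of_tendsto_div_sqrt hk)) (by norm_num)
  rw [div_self hx.ne', sub_zero, div_one] at hscale
  have hgauss := (tendsto_prod_one_sub_mul_div hk zero_le_one le_rfl).div
    (tendsto_prod_one_sub_mul_div hk (by positivity) (inv_le_one_of_one_le₀ hm1.le))
    (exp_pos _).ne'
  rw [← exp_sub, show -(1 * x ^ 2 / 2) - -((m : ℝ)⁻¹ * x ^ 2 / 2) = -((m - 1) * x ^ 2) / (2 * m)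
    by field_simp; ring] at hgauss
  have hlim := (hscale.mul hgauss).div_const E
  rw [one_mul, div_self hE0] at hlim
  refine hlim.congr' ?_
  filter_upwards [eventually_two_mul_succ_le_of_tendsto_div_sqrt hk] with n hn
  simp only [Pi.div_apply]
  set k := ⌊x * √n⌋₊
  have hn0 : (0 : ℝ) < n := by exact_mod_cast (by omega : 0 < n)
  have hkn : (k : ℝ) < n := by exact_mod_cast (by omega : k < n)
  rw [mul_div_assoc (k / (n - k) * (m : ℝ) ^ k * (m - 1)),
    choose_div_choose_eq_prod_div_pow (by omega) (by omega)]
  generalize (∏ j ∈ range (k + 1), (1 - 1 * j / n : ℝ)) / _ = R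
  have hm1' : (m : ℝ) - 1 ≠ 0 := (sub_pos.2 hm1).ne'
  field_simp [(sqrt_pos.2 hn0).ne', (sub_pos.2 hkn).ne']
  rw [sq_sqrt hn0.le]
  ring
end

section
/- For fixed ρ > 0 and fixed x > 0, with k = ⌊x√n⌋, the probability Pr{X_n^ρ = k} = k·ρ^k·(1+ρ)·(n)_k / (nρ+k)_{k+1} is asymptotic to ((1+ρ)/ρ)·x·exp(-(1+ρ)x²/(2ρ))·(1/√n) as n → ∞. -/
/-!
Since `(nρ+k)_{k+1} = nρ ∏_{j<k} (nρ+j+1)`, the probability equals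
`k(1+ρ)/(nρ) · ∏_{j<k} (1 - j/n) / ∏_{j<k} (1 + (j+1)/(nρ))`.
For `k ~ x√n` every factor is `1 + u` with `u = O(k/n)`, and `log (1 + u) = u + O(u²)`, where
`∑_{j<k} u_j² = O(k³/n²) → 0`. The linear sums tend to `-x²/2` and `x²/(2ρ)`, so the quotient of
products tends to `exp(-(1+ρ)x²/(2ρ))`, while `k(1+ρ)/(nρ) ~ (1+ρ)x/(ρ√n)`.
-/

open Filter Finset Real Topology

lemma abs_log_one_add_sub_self_le {u : ℝ} (hu : |u| ≤ 1 / 2) :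
    |log (1 + u) - u| ≤ 2 * u ^ 2 := by
  have h := abs_log_sub_add_sum_range_le (x := -u) (by rw [abs_neg]; linarith) 1
  rw [abs_neg, sum_range_one, sub_neg_eq_add] at h
  calc |log (1 + u) - u| ≤ |u| ^ 2 / (1 - |u|) := by
        convert h using 2; push_cast; ring
    _ ≤ 2 * u ^ 2 := by
      rw [div_le_iff₀ (by linarith), sq_abs]
      nlinarith [mul_nonneg (sq_nonneg u) (by linarith : (0 : ℝ) ≤ 1 - 2 * |u|)]

theorem tendsto_prod_one_add_of_tendsto_sum {α ι : Type*} {l : Filter α} {s : α → Finset ι}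
    {u : α → ι → ℝ} {L : ℝ} (hsmall : ∀ᶠ a in l, ∀ i ∈ s a, |u a i| ≤ 1 / 2)
    (hsum : Tendsto (fun a => ∑ i ∈ s a, u a i) l (𝓝 L))
    (hsq : Tendsto (fun a => ∑ i ∈ s a, u a i ^ 2) l (𝓝 0)) :
    Tendsto (fun a => ∏ i ∈ s a, (1 + u a i)) l (𝓝 (exp L)) := by
  have herr : Tendsto (fun a => ∑ i ∈ s a, (log (1 + u a i) - u a i)) l (𝓝 0) := by
    refine squeeze_zero_norm' ?_ (by simpa using hsq.const_mul 2)
    filter_upwards [hsmall] with a ha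
    calc ‖∑ i ∈ s a, (log (1 + u a i) - u a i)‖
        ≤ ∑ i ∈ s a, |log (1 + u a i) - u a i| := norm_sum_le _ _
      _ ≤ ∑ i ∈ s a, 2 * u a i ^ 2 :=
        sum_le_sum fun i hi => abs_log_one_add_sub_self_le (ha i hi)
      _ = 2 * ∑ i ∈ s a, u a i ^ 2 := (mul_sum _ _ _).symm
  have hlog : Tendsto (fun a => ∑ i ∈ s a, log (1 + u a i)) l (𝓝 L) := by
    simpa [← sum_add_distrib] using herr.add hsum
  refine ((continuous_exp.tendsto L).comp hlog).congr' ?_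
  filter_upwards [hsmall] with a ha
  rw [Function.comp_apply, exp_sum]
  exact prod_congr rfl fun i hi => exp_log (by linarith [neg_abs_le (u a i), ha i hi])

lemma sum_range_natCast_add (k : ℕ) (b : ℝ) :
    ∑ j ∈ range k, ((j : ℝ) + b) = k * (k - 1) / 2 + k * b := by
  induction k with
  | zero => simp
  | succ m ih => rw [sum_range_succ, ih]; push_cast; ring

lemma prod_range_succ_add_natCast_sub (c : ℝ) (k : ℕ) :
    ∏ j ∈ range (k + 1), (c + k - j) = c * ∏ j ∈ range k, (c + (j + 1)) := by
  calc ∏ j ∈ range (k + 1), (c + k - j)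
      = ∏ j ∈ range (k + 1), (c + ((k + 1 - 1 - j : ℕ) : ℝ)) := by
        refine prod_congr rfl fun j hj => ?_
        rw [add_tsub_cancel_right, Nat.cast_sub (mem_range_succ_iff.mp hj)]
        ring
    _ = ∏ j ∈ range (k + 1), (c + j) := prod_range_reflect (fun j : ℕ => c + j) _
    _ = c * ∏ j ∈ range k, (c + (j + 1)) := by
        rw [prod_range_succ']; push_cast; ring

lemma falling_factorial_ratio_eq {n ρ : ℝ} (hn : n ≠ 0) (hρ : ρ ≠ 0) (k : ℕ) :
    k * ρ ^ k * (1 + ρ) * (∏ j ∈ range k, (n - j)) / ∏ j ∈ range (k + 1), (n * ρ + k - j)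
      = k * (1 + ρ) / (n * ρ) * (∏ j ∈ range k, (1 - j / n)) /
          ∏ j ∈ range k, (1 + (j + 1) / (n * ρ)) := by
  have hnum : ∏ j ∈ range k, (n - j) = n ^ k * ∏ j ∈ range k, (1 - j / n) := by
    rw [← card_range k, ← prod_const, card_range, ← prod_mul_distrib]
    exact prod_congr rfl fun j _ => by field_simp
  have hden : ∏ j ∈ range k, (n * ρ + (j + 1)) =
      (n * ρ) ^ k * ∏ j ∈ range k, (1 + (j + 1) / (n * ρ)) := by
    rw [← card_range k, ← prod_const, card_range, ← prod_mul_distrib]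
    exact prod_congr rfl fun j _ => by field_simp
  rw [prod_range_succ_add_natCast_sub, hnum, hden, mul_pow]
  calc _ = (n ^ k * ρ ^ k) * (k * (1 + ρ) * ∏ j ∈ range k, (1 - j / n)) /
        ((n ^ k * ρ ^ k) * (n * ρ * ∏ j ∈ range k, (1 + (j + 1) / (n * ρ)))) := by ring
    _ = _ := by rw [mul_div_mul_left _ _ (by positivity)]; ring

theorem tendsto_prod_one_add_mul_natCast_add_div {k : ℕ → ℕ} {x : ℝ}
    (hk : Tendsto (fun n : ℕ => (k n : ℝ) / √n) atTop (𝓝 x)) (a b : ℝ) :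
    Tendsto (fun n : ℕ => ∏ j ∈ range (k n), (1 + a * (j + b) / n)) atTop
      (𝓝 (exp (a * x ^ 2 / 2))) := by
  have hsq : Tendsto (fun n : ℕ => (k n : ℝ) ^ 2 / n) atTop (𝓝 (x ^ 2)) :=
    (hk.pow 2).congr fun n => by rw [div_pow, sq_sqrt n.cast_nonneg]
  have hdiv : Tendsto (fun n : ℕ => (k n : ℝ) / n) atTop (𝓝 0) := by
    have := hk.mul
      (tendsto_inv_atTop_zero.comp (tendsto_sqrt_atTop.comp tendsto_natCast_atTop_atTop))
    rw [mul_zero] at this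
    exact this.congr fun n => by
      simp only [Function.comp_apply, ← div_eq_mul_inv, div_div, mul_self_sqrt n.cast_nonneg]
  set M : ℕ → ℝ := fun n => |a| * (k n / n) + |a| * |b| * (n : ℝ)⁻¹ with hM_def
  have hM : Tendsto M atTop (𝓝 0) := by
    simpa using (hdiv.const_mul |a|).add
      ((tendsto_inv_atTop_nhds_zero_nat (𝕜 := ℝ)).const_mul (|a| * |b|))
  have hbound : ∀ n, ∀ j ∈ range (k n), |a * (j + b) / n| ≤ M n := by
    intro n j hj
    have hj' : (j : ℝ) ≤ k n := by exact_mod_cast (mem_range.mp hj).le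
    calc |a * (j + b) / n| = |a| * |(j : ℝ) + b| / n := by
          rw [abs_div, abs_mul, Nat.abs_cast]
      _ ≤ |a| * (k n + |b|) / n := by
          gcongr
          exact (abs_add_le _ _).trans (by rw [Nat.abs_cast]; linarith)
      _ = M n := by ring
  refine tendsto_prod_one_add_of_tendsto_sum ?_ ?_ ?_
  · filter_upwards [hM.eventually (ge_mem_nhds (by norm_num : (0 : ℝ) < 1 / 2))] with n hn j hj
    exact (hbound n j hj).trans hn
  · have hsum : ∀ n : ℕ, ∑ j ∈ range (k n), a * (j + b) / n =
        a / 2 * ((k n : ℝ) ^ 2 / n) + a * (b - 1 / 2) * (k n / n) := fun n => by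
      rw [← sum_div, ← mul_sum, sum_range_natCast_add]; ring
    have h := (hsq.const_mul (a / 2)).add (hdiv.const_mul (a * (b - 1 / 2)))
    rw [mul_zero, add_zero, div_mul_eq_mul_div] at h
    exact h.congr fun n => (hsum n).symm
  · have hkM : Tendsto (fun n => (k n : ℝ) * M n) atTop (𝓝 (|a| * x ^ 2 + |a| * |b| * 0)) :=
      ((hsq.const_mul |a|).add (hdiv.const_mul (|a| * |b|))).congr fun n => by
        simp only [hM_def]; ring
    refine squeeze_zero (fun n => sum_nonneg fun j _ => sq_nonneg _) (fun n => ?_)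
      (by simpa using hkM.mul hM)
    calc ∑ j ∈ range (k n), (a * (j + b) / n) ^ 2 ≤ ∑ j ∈ range (k n), M n ^ 2 :=
          sum_le_sum fun j hj => by
            rw [← sq_abs]; exact pow_le_pow_left₀ (abs_nonneg _) (hbound n j hj) 2
      _ = k n * M n * M n := by rw [sum_const, card_range, nsmul_eq_mul]; ring

/-- For fixed `ρ > 0` and fixed `x > 0`, with `k = ⌊x √n⌋`, the probability
`Pr{X_n^ρ = k} = k ρ^k (1+ρ) (n)_k / (nρ+k)_{k+1}` is asymptotic to
`((1+ρ)/ρ) x exp(-(1+ρ)x²/(2ρ)) / √n` as `n → ∞`.  Here `(n)_k = ∏_{j<k} (n-j)`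
and `(nρ+k)_{k+1} = ∏_{j<k+1} (nρ+k-j)` are falling factorials. -/
theorem stmt7 (ρ : ℝ) (hρ : 0 < ρ) (x : ℝ) (hx : 0 < x) :
    Tendsto (fun n : ℕ =>
        ((fun k : ℕ =>
          ((k : ℝ) * ρ ^ k * (1 + ρ) * (∏ j ∈ Finset.range k, ((n : ℝ) - j)) /
              (∏ j ∈ Finset.range (k + 1), ((n : ℝ) * ρ + k - j))) /
            ((1 + ρ) / ρ * x * Real.exp (-((1 + ρ) * x ^ 2) / (2 * ρ)) / Real.sqrt n))) ⌊x * Real.sqrt n⌋₊)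
      atTop (nhds 1) := by
  have hk : Tendsto (fun n : ℕ => (⌊x * √n⌋₊ : ℝ) / √n) atTop (𝓝 x) :=
    (tendsto_nat_floor_mul_div_atTop hx.le).comp
      (tendsto_sqrt_atTop.comp tendsto_natCast_atTop_atTop)
  have hA : Tendsto (fun n : ℕ => ∏ j ∈ range ⌊x * √n⌋₊, (1 - (j : ℝ) / n)) atTop
      (𝓝 (exp (-1 * x ^ 2 / 2))) :=
    (tendsto_prod_one_add_mul_natCast_add_div hk (-1) 0).congr fun n =>
      prod_congr rfl fun j _ => by ring
  have hB : Tendsto (fun n : ℕ => ∏ j ∈ range ⌊x * √n⌋₊, (1 + ((j : ℝ) + 1) / (n * ρ))) atTop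
      (𝓝 (exp (ρ⁻¹ * x ^ 2 / 2))) :=
    (tendsto_prod_one_add_mul_natCast_add_div hk ρ⁻¹ 1).congr fun n =>
      prod_congr rfl fun j _ => by ring
  have hlim := ((hk.div_const x).mul (hA.div hB (exp_pos _).ne')).div_const
    (exp (-((1 + ρ) * x ^ 2) / (2 * ρ)))
  have hone : x / x * (exp (-1 * x ^ 2 / 2) / exp (ρ⁻¹ * x ^ 2 / 2)) /
      exp (-((1 + ρ) * x ^ 2) / (2 * ρ)) = 1 := by
    rw [div_self hx.ne', one_mul, ← exp_sub, ← exp_sub, exp_eq_one_iff]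
    field_simp; ring
  rw [hone] at hlim
  refine hlim.congr' ?_
  filter_upwards [eventually_gt_atTop 0] with n hn
  have hn' : (0 : ℝ) < n := by exact_mod_cast hn
  rw [Pi.div_apply, falling_factorial_ratio_eq hn'.ne' hρ.ne']
  generalize ∏ j ∈ range ⌊x * √(n : ℝ)⌋₊, (1 - (j : ℝ) / n) = A
  generalize ∏ j ∈ range ⌊x * √(n : ℝ)⌋₊, (1 + ((j : ℝ) + 1) / (n * ρ)) = B
  have hs : (n : ℝ) = √n * √n := (mul_self_sqrt hn'.le).symm
  have hs0 : 0 < √(n : ℝ) := sqrt_pos.mpr hn'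
  generalize √(n : ℝ) = s at hs hs0 ⊢
  rw [hs]
  field_simp
end

section
/- With the preferential attachment in-degree distribution (i.i.d. generalized negative binomial with parameter ρ conditioned to sum to n), the number of cyclic vertices satisfies Pr{X_n^ρ = k} = k·ρ^k·(1+ρ)·(n)_k/(nρ+k)_{k+1} for 1 ≤ k < n, and Pr{X_n^ρ = n} = ρ^n·n!·Γ(nρ)/Γ(n+nρ). -/
/-!
Under the given law, `Pr{D̂ᵢ = a} = c · multichoose ρ a · (1 + ρ)⁻ᵃ`, so after conditioning on
`∑ D̂ᵢ = n` both quantities are ratios of sums, over the compositions `d` of `n`, of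
`∏ᵢ multichoose ρ (dᵢ)`, weighted in the first case by `(d₀ - 1) d₀ d₁ ⋯ d_{k-1}`.
Such sums are coefficients of products of the series `(1 - X)⁻ˣ = ∑ₐ multichoose x a Xᵃ`, which
multiply by adding exponents (Chu–Vandermonde). A falling-factorial weight `(a)ⱼ` turns
`(1 - X)⁻ˣ` into `x⁽ʲ⁾ Xʲ (1 - X)^(-(x + j))`, so the numerator is
`ρᵏ (1 + ρ) multichoose (nρ + k + 1) (n - k - 1)` and the denominator is `multichoose (nρ) n`.
-/

open MeasureTheory ProbabilityTheory Finset

section Multichoose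

open Polynomial

theorem Ring.multichoose_add {R : Type*} [CommRing R] [BinomialRing R] (r s : R) (k : ℕ) :
    Ring.multichoose (r + s) k =
      ∑ ij ∈ antidiagonal k, Ring.multichoose r ij.1 * Ring.multichoose s ij.2 := by
  have h := Ring.add_choose_eq (r := -r) (s := -s) k (Commute.all _ _)
  rw [← neg_add, Ring.choose_neg'] at h
  rw [← smul_left_cancel_iff (Int.negOnePow k), h, smul_sum]
  refine sum_congr rfl fun ij hij => ?_
  rw [Ring.choose_neg', Ring.choose_neg', smul_mul_smul_comm, ← Int.negOnePow_add,
    ← Nat.cast_add, mem_antidiagonal.mp hij]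

variable {K : Type*} [Field K]

theorem multichoose_eq_ascPochhammer_div [CharZero K] (x : K) (a : ℕ) :
    Ring.multichoose x a = (ascPochhammer K a).eval x / a.factorial := by
  rw [eq_div_iff (Nat.cast_ne_zero.2 a.factorial_ne_zero), ← ascPochhammer_smeval_eq_eval,
    ← Ring.factorial_nsmul_multichoose_eq_ascPochhammer, nsmul_eq_mul, mul_comm]

theorem descPochhammer_eval_mul_multichoose [CharZero K] (x : K) (j a : ℕ) :
    (descPochhammer K j).eval (a : K) * Ring.multichoose x a =
      if j ≤ a then (ascPochhammer K j).eval x * Ring.multichoose (x + j) (a - j) else 0 := by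
  rw [descPochhammer_eval_eq_descFactorial]
  split_ifs with hja
  · obtain ⟨b, rfl⟩ := Nat.exists_eq_add_of_le' hja
    have : ((b + j).descFactorial j : K) ≠ 0 := by
      exact_mod_cast (Nat.descFactorial_pos.mpr (by omega)).ne'
    rw [Nat.add_sub_cancel, multichoose_eq_ascPochhammer_div, multichoose_eq_ascPochhammer_div,
      ← Nat.factorial_mul_descFactorial hja, Nat.add_sub_cancel, add_comm b j,
      ← ascPochhammer_mul, eval_mul, eval_comp]
    simp only [eval_add, eval_X, eval_natCast, Nat.cast_mul]
    field_simp
  · rw [Nat.descFactorial_eq_zero_iff_lt.mpr (by omega), Nat.cast_zero, zero_mul]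

variable [LinearOrder K] [IsStrictOrderedRing K]

theorem multichoose_pos {x : K} (hx : 0 < x) (a : ℕ) : 0 < Ring.multichoose x a := by
  rw [multichoose_eq_ascPochhammer_div]
  exact div_pos (ascPochhammer_pos a x hx) (by positivity)

theorem multichoose_add_div_multichoose {y : K} (hy : 0 < y) {b N : ℕ} (h : b ≤ N) :
    Ring.multichoose (y + b) (N - b) / Ring.multichoose y N =
      (descPochhammer K b).eval (N : K) / (ascPochhammer K b).eval y := by
  have key := descPochhammer_eval_mul_multichoose y b N
  rw [if_pos h] at key
  rw [div_eq_div_iff (multichoose_pos hy N).ne' (ascPochhammer_pos b y hy).ne']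
  linear_combination -key

theorem multichoose_add_succ_div_multichoose {y : K} (hy : 0 < y) {k N : ℕ} (h : k < N) :
    Ring.multichoose (y + (k + 1 : ℕ)) (N - (k + 1)) / Ring.multichoose y N =
      (∏ j ∈ range k, ((N : K) - j)) * (N - k) / ∏ j ∈ range (k + 1), (y + k - j) := by
  have hasc : (ascPochhammer K (k + 1)).eval y = ∏ j ∈ range (k + 1), (y + k - j) := by
    rw [← descPochhammer_eval_eq_prod_range, descPochhammer_eval_eq_ascPochhammer]
    congr 1
    push_cast
    ring
  rw [multichoose_add_div_multichoose hy h, descPochhammer_eval_eq_prod_range, prod_range_succ,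
    hasc]

end Multichoose

namespace Real

theorem Gamma_add_nat_eq_mul_ascPochhammer {x : ℝ} (hx : 0 < x) (a : ℕ) :
    Gamma (x + a) = Gamma x * (ascPochhammer ℝ a).eval x := by
  induction a with
  | zero => simp
  | succ a ih =>
    rw [Nat.cast_succ, ← add_assoc, Gamma_add_one (by positivity), ih, ascPochhammer_succ_eval]
    ring

theorem multichoose_eq_Gamma_div {x : ℝ} (hx : 0 < x) (a : ℕ) :
    Ring.multichoose x a = Gamma (a + x) / (a.factorial * Gamma x) := by
  have := (Gamma_pos_of_pos hx).ne'
  rw [multichoose_eq_ascPochhammer_div, add_comm, Gamma_add_nat_eq_mul_ascPochhammer hx]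
  field_simp

end Real

open PowerSeries in
theorem PowerSeries.coeff_prod_eq_sum_piAntidiag {R ι : Type*} [CommSemiring R] [Fintype ι]
    [DecidableEq ι] (φ : ι → R⟦X⟧) (N : ℕ) :
    coeff N (∏ i, φ i) = ∑ d ∈ piAntidiag univ N, ∏ i, coeff (d i) (φ i) := by
  rw [coeff_prod, finsuppAntidiag, sum_map, ← sum_attach (piAntidiag univ N)]
  rfl

section NegBinomialSeries

open PowerSeries

variable {R : Type*} [CommRing R] [BinomialRing R]

/-- The power series `(1 - X)⁻ˣ`. -/
noncomputable def negBinomialSeries (x : R) : R⟦X⟧ := mk (Ring.multichoose x)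

theorem negBinomialSeries_zero : negBinomialSeries (0 : R) = 1 := by
  ext (_ | n) <;> simp [negBinomialSeries, Ring.multichoose_zero_succ, coeff_one]

theorem negBinomialSeries_add (x y : R) :
    negBinomialSeries (x + y) = negBinomialSeries x * negBinomialSeries y := by
  ext N
  simp [negBinomialSeries, coeff_mul, Ring.multichoose_add]

theorem prod_negBinomialSeries {ι : Type*} (s : Finset ι) (x : ι → R) :
    ∏ i ∈ s, negBinomialSeries (x i) = negBinomialSeries (∑ i ∈ s, x i) := by
  induction s using Finset.cons_induction with
  | empty => simp [negBinomialSeries_zero]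
  | cons i s hi ih => rw [prod_cons, sum_cons, ih, negBinomialSeries_add]

variable {ι : Type*} [Fintype ι] [DecidableEq ι]

theorem sum_piAntidiag_prod_multichoose (x : ι → R) (N : ℕ) :
    ∑ d ∈ piAntidiag univ N, ∏ i, Ring.multichoose (x i) (d i) =
      Ring.multichoose (∑ i, x i) N := by
  have h := coeff_prod_eq_sum_piAntidiag (fun i => negBinomialSeries (x i)) N
  rw [prod_negBinomialSeries] at h
  simpa [negBinomialSeries] using h.symm

variable {K : Type*} [Field K] [CharZero K]

theorem mk_descPochhammer_mul_multichoose (x : K) (j : ℕ) :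
    mk (fun a => (descPochhammer K j).eval (a : K) * Ring.multichoose x a) =
      C ((ascPochhammer K j).eval x) * (X ^ j * negBinomialSeries (x + j)) := by
  ext a
  rw [coeff_mk, descPochhammer_eval_mul_multichoose, coeff_C_mul, coeff_X_pow_mul']
  split_ifs <;> simp [negBinomialSeries]

theorem sum_piAntidiag_prod_descPochhammer_mul_multichoose (x : ι → K) (j : ι → ℕ) {N : ℕ}
    (h : ∑ i, j i ≤ N) :
    ∑ d ∈ piAntidiag univ N,
        ∏ i, (descPochhammer K (j i)).eval (d i : K) * Ring.multichoose (x i) (d i) =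
      (∏ i, (ascPochhammer K (j i)).eval (x i)) *
        Ring.multichoose (∑ i, (x i + j i)) (N - ∑ i, j i) := by
  have hcoeff := coeff_prod_eq_sum_piAntidiag
    (fun i => mk fun a => (descPochhammer K (j i)).eval (a : K) * Ring.multichoose (x i) a) N
  simp only [coeff_mk] at hcoeff
  rw [← hcoeff]
  simp only [mk_descPochhammer_mul_multichoose]
  rw [prod_mul_distrib, prod_mul_distrib, ← map_prod, prod_pow_eq_pow_sum,
    prod_negBinomialSeries, coeff_C_mul, coeff_X_pow_mul', if_pos h]
  simp [negBinomialSeries]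

end NegBinomialSeries

theorem sum_piAntidiag_cyclic_weight (ρ : ℝ) {n k N : ℕ} (h0 : 0 < n) (hk : 0 < k)
    (hkn : k ≤ n) (hN : k + 1 ≤ N) :
    ∑ d ∈ piAntidiag univ N,
        (((d ⟨0, h0⟩ : ℝ) - 1) * ∏ i ∈ univ.filter (fun i : Fin n => (i : ℕ) < k), (d i : ℝ)) *
          ∏ i, Ring.multichoose ρ (d i) =
      ρ ^ k * (1 + ρ) * Ring.multichoose (n * ρ + (k + 1 : ℕ)) (N - (k + 1)) := by
  set i₀ : Fin n := ⟨0, h0⟩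
  have hi₀ : (i₀ : ℕ) < k := hk
  set j : Fin n → ℕ := fun i => (if (i : ℕ) < k then 1 else 0) + if i = i₀ then 1 else 0
  have hdesc : ∀ i (a : ℝ), (descPochhammer ℝ (j i)).eval a =
      (if (i : ℕ) < k then a else 1) * if i = i₀ then a - 1 else 1 := by
    intro i a
    obtain rfl | h2 := eq_or_ne i i₀
    · simp [j, hi₀, descPochhammer_succ_eval]
    · by_cases h1 : (i : ℕ) < k <;> simp [j, h1, h2]
  have hasc : ∀ i, (ascPochhammer ℝ (j i)).eval ρ =
      (if (i : ℕ) < k then ρ else 1) * if i = i₀ then 1 + ρ else 1 := by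
    intro i
    obtain rfl | h2 := eq_or_ne i i₀
    · simp [j, hi₀, ascPochhammer_succ_eval, add_comm]
    · by_cases h1 : (i : ℕ) < k <;> simp [j, h1, h2]
  have hj : ∑ i, j i = k + 1 := by
    simp [j, sum_add_distrib, sum_boole, Fin.card_filter_val_lt, hkn]
  calc _ = ∑ d ∈ piAntidiag univ N,
          ∏ i, (descPochhammer ℝ (j i)).eval (d i : ℝ) * Ring.multichoose ρ (d i) := by
        refine sum_congr rfl fun d _ => ?_
        simp_rw [prod_mul_distrib (s := univ)
          (f := fun i => (descPochhammer ℝ (j i)).eval (d i : ℝ)), hdesc]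
        rw [prod_mul_distrib, prod_ite_eq', ← prod_filter]
        simp only [mem_univ, if_true]
        ring
    _ = _ := sum_piAntidiag_prod_descPochhammer_mul_multichoose (fun _ => ρ) j (hj ▸ hN)
    _ = _ := by
        simp_rw [hasc]
        rw [prod_mul_distrib, ← prod_filter, prod_const, Fin.card_filter_val_lt, prod_ite_eq']
        simp only [sum_add_distrib, ← Nat.cast_sum, hj]
        simp [hkn]

section DiscreteRandomVariable

variable {Ω α : Type*} [MeasurableSpace Ω] {μ : Measure Ω} [IsFiniteMeasure μ] {V : Ω → α}

theorem setIntegral_comp_preimage_finset (hV : ∀ a, MeasurableSet (V ⁻¹' {a}))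
    (F : Finset α) (g : α → ℝ) :
    ∫ ω in V ⁻¹' F, g (V ω) ∂μ = ∑ a ∈ F, g a * μ.real (V ⁻¹' {a}) := by
  have hconst : ∀ a, Set.EqOn (fun ω => g (V ω)) (fun _ => g a) (V ⁻¹' {a}) :=
    fun a ω (hω : V ω = a) => by simp only [hω]
  rw [← set_biUnion_preimage_singleton, integral_biUnion_finset F (fun a _ => hV a)
    (Set.pairwiseDisjoint_fiber V F) fun a _ =>
      (integrableOn_const (measure_ne_top μ _)).congr_fun (hconst a).symm (hV a)]
  refine sum_congr rfl fun a _ => ?_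
  rw [setIntegral_congr_fun (hV a) (hconst a), setIntegral_const, smul_eq_mul, mul_comm]

theorem integral_cond_comp_preimage_finset (hV : ∀ a, MeasurableSet (V ⁻¹' {a}))
    (F : Finset α) (g : α → ℝ) :
    ∫ ω, g (V ω) ∂μ[|V ⁻¹' F] =
      ∑ a ∈ F, g a * (μ.real (V ⁻¹' {a}) / ∑ b ∈ F, μ.real (V ⁻¹' {b})) := by
  rw [ProbabilityTheory.cond, integral_smul_measure, setIntegral_comp_preimage_finset hV,
    ENNReal.toReal_inv, ← measureReal_def,
    ← sum_measureReal_preimage_singleton F fun a _ => hV a, smul_eq_mul, mul_sum]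
  exact sum_congr rfl fun a _ => by ring

theorem cond_preimage_singleton_toReal (hV : ∀ a, MeasurableSet (V ⁻¹' {a}))
    {F : Finset α} {a : α} (ha : a ∈ F) :
    (μ[|V ⁻¹' F] (V ⁻¹' {a})).toReal =
      μ.real (V ⁻¹' {a}) / ∑ b ∈ F, μ.real (V ⁻¹' {b}) := by
  have hF : MeasurableSet (V ⁻¹' F) := by
    rw [← set_biUnion_preimage_singleton]
    exact F.measurableSet_biUnion fun b _ => hV b
  have hsub : V ⁻¹' {a} ⊆ V ⁻¹' F := Set.preimage_mono (by simpa using ha)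
  rw [cond_apply hF, Set.inter_eq_self_of_subset_right hsub, ENNReal.toReal_mul,
    ENNReal.toReal_inv, ← measureReal_def, ← measureReal_def,
    ← sum_measureReal_preimage_singleton F fun b _ => hV b, inv_mul_eq_div]

end DiscreteRandomVariable

theorem measureReal_preimage_eq_mul_prod_multichoose {Ω ι : Type*} [MeasurableSpace Ω]
    {μ : Measure Ω} [Fintype ι] {D : ι → Ω → ℕ} {ρ : ℝ} (hρ : 0 < ρ) (hindep : iIndepFun D μ)
    (hdist : ∀ i k, μ {ω | D i ω = k} =
      ENNReal.ofReal (Real.Gamma (k + ρ) / (Nat.factorial k * Real.Gamma ρ) *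
        (ρ / (1 + ρ)) ^ ρ * (1 / (1 + ρ)) ^ k)) (d : ι → ℕ) :
    μ.real ((fun ω i => D i ω) ⁻¹' {d}) =
      ((ρ / (1 + ρ)) ^ ρ) ^ Fintype.card ι * (1 / (1 + ρ)) ^ (∑ i, d i) *
        ∏ i, Ring.multichoose ρ (d i) := by
  have hfiber : (fun ω i => D i ω) ⁻¹' {d} = ⋂ i, {ω | D i ω = d i} := by
    ext ω
    simp [funext_iff]
  rw [measureReal_def, hfiber, hindep.meas_iInter (s := fun i => {ω | D i ω = d i})
    fun i => ⟨{d i}, measurableSet_singleton _, rfl⟩, ENNReal.toReal_prod]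
  simp_rw [hdist, ← Real.multichoose_eq_Gamma_div hρ]
  rw [prod_congr rfl fun i _ => ENNReal.toReal_ofReal (by
    have := multichoose_pos hρ (d i); positivity)]
  rw [prod_mul_distrib, prod_mul_distrib, prod_const, card_univ, prod_pow_eq_pow_sum]
  ring

theorem measureReal_preimage_div_sum_eq {Ω ι : Type*} [MeasurableSpace Ω] {μ : Measure Ω}
    [Fintype ι] [DecidableEq ι] {D : ι → Ω → ℕ} {ρ : ℝ} (hρ : 0 < ρ) (hindep : iIndepFun D μ)
    (hdist : ∀ i k, μ {ω | D i ω = k} =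
      ENNReal.ofReal (Real.Gamma (k + ρ) / (Nat.factorial k * Real.Gamma ρ) *
        (ρ / (1 + ρ)) ^ ρ * (1 / (1 + ρ)) ^ k)) {N : ℕ} {d : ι → ℕ}
    (hd : d ∈ piAntidiag univ N) :
    μ.real ((fun ω i => D i ω) ⁻¹' {d}) /
        ∑ e ∈ piAntidiag univ N, μ.real ((fun ω i => D i ω) ⁻¹' {e}) =
      (∏ i, Ring.multichoose ρ (d i)) / Ring.multichoose (Fintype.card ι * ρ) N := by
  set K := ((ρ / (1 + ρ)) ^ ρ) ^ Fintype.card ι * (1 / (1 + ρ)) ^ N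
  have hfiber : ∀ e ∈ piAntidiag univ N,
      μ.real ((fun ω i => D i ω) ⁻¹' {e}) = K * ∏ i, Ring.multichoose ρ (e i) := fun e he => by
    rw [measureReal_preimage_eq_mul_prod_multichoose hρ hindep hdist, (mem_piAntidiag.1 he).1]
  rw [hfiber d hd, sum_congr rfl hfiber, ← mul_sum, sum_piAntidiag_prod_multichoose,
    mul_div_mul_left _ _ (by positivity)]
  simp

/-- With the preferential-attachment in-degree distribution (i.i.d. generalized negative
binomial with parameter `ρ`, conditioned to sum to `n`), the number of cyclic vertices
satisfies `Pr{X_n^ρ = k} = (k/(n-k)) E((D̂_1-1) D̂_1 ⋯ D̂_k) = k ρ^k (1+ρ) (n)_k/(nρ+k)_{k+1}`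
for `1 ≤ k < n`, and `Pr{X_n^ρ = n} = Pr{D̂_i = 1 ∀ i} = ρ^n n! Γ(nρ)/Γ(n+nρ)`. -/
theorem stmt15 {Ω : Type*} [MeasurableSpace Ω] (μ : Measure Ω) [IsProbabilityMeasure μ]
    (ρ : ℝ) (hρ : 0 < ρ) (n : ℕ) (hn : 1 ≤ n) (D : Fin n → Ω → ℕ)
    (hmeas : ∀ i, Measurable (D i))
    (hindep : iIndepFun D μ)
    (hdist : ∀ i k, μ {ω | D i ω = k} =
      ENNReal.ofReal (Real.Gamma (k + ρ) / (Nat.factorial k * Real.Gamma ρ) *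
        (ρ / (1 + ρ)) ^ ρ * (1 / (1 + ρ)) ^ k)) :
    (∀ k : ℕ, 1 ≤ k → k < n →
      (k : ℝ) / ((n : ℝ) - k) *
          ∫ ω, (((D ⟨0, by omega⟩ ω : ℝ) - 1) *
              ∏ i ∈ Finset.univ.filter (fun i : Fin n => (i : ℕ) < k), (D i ω : ℝ))
            ∂(μ[|{ω | ∑ i, D i ω = n}])
        = (k : ℝ) * ρ ^ k * (1 + ρ) * (∏ j ∈ Finset.range k, ((n : ℝ) - j)) /
            (∏ j ∈ Finset.range (k + 1), ((n : ℝ) * ρ + k - j))) ∧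
    ((μ[|{ω | ∑ i, D i ω = n}] {ω | ∀ i, D i ω = 1}).toReal
      = ρ ^ n * (Nat.factorial n : ℝ) * Real.Gamma (n * ρ) / Real.Gamma (n + n * ρ)) := by
  set V : Ω → Fin n → ℕ := fun ω i => D i ω
  have hS : {ω | ∑ i, D i ω = n} = V ⁻¹' (piAntidiag univ n : Finset (Fin n → ℕ)) := by
    ext; simp [V]
  have hV : ∀ d, MeasurableSet (V ⁻¹' {d}) := fun d =>
    measurable_pi_lambda _ hmeas (measurableSet_singleton d)
  have hlaw : ∀ d ∈ piAntidiag univ n,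
      μ.real (V ⁻¹' {d}) / ∑ e ∈ piAntidiag univ n, μ.real (V ⁻¹' {e}) =
        (∏ i, Ring.multichoose ρ (d i)) / Ring.multichoose (n * ρ) n := fun d hd => by
    simpa using measureReal_preimage_div_sum_eq hρ hindep hdist hd
  refine ⟨fun k hk hkn => ?_, ?_⟩
  · have hnk : (n : ℝ) - k ≠ 0 := sub_ne_zero.2 (by exact_mod_cast hkn.ne')
    rw [hS, integral_cond_comp_preimage_finset hV _ fun d => ((d ⟨0, by omega⟩ : ℝ) - 1) *
        ∏ i ∈ univ.filter (fun i : Fin n => (i : ℕ) < k), (d i : ℝ),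
      sum_congr rfl fun d hd => by rw [hlaw d hd, mul_div_assoc'], ← sum_div,
      sum_piAntidiag_cyclic_weight ρ (by omega) hk hkn.le hkn, mul_div_assoc,
      multichoose_add_succ_div_multichoose (by positivity) hkn]
    field_simp
  · have h1 : {ω | ∀ i, D i ω = 1} = V ⁻¹' {fun _ => 1} := by ext; simp [V, funext_iff]
    have hmem : (fun _ => 1 : Fin n → ℕ) ∈ piAntidiag univ n := by simp
    have hΓ := Real.Gamma_pos_of_pos (show 0 < (n : ℝ) * ρ by positivity)
    rw [hS, h1, cond_preimage_singleton_toReal hV hmem, hlaw _ hmem,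
      Real.multichoose_eq_Gamma_div (x := n * ρ) (by positivity)]
    simp only [Ring.multichoose_one_right, prod_const, card_univ, Fintype.card_fin]
    field_simp
end

section
/- With the anti-preferential attachment in-degree distribution (i.i.d. Bin(m,1/m) conditioned to sum to n, m ≥ 2), the number of cyclic vertices satisfies Pr{X_n^m = k} = (k/(n-k))·m^k·(m-1)·C(nm-k-1, n-k-1)/C(nm, n) for 1 ≤ k < n, and Pr{X_n^m = n} = m^n/C(nm, n). -/
/-!
Conditioned on `∑ i, D i = s`, the i.i.d. `Bin(m, p)` weights `∏ i, C(m, dᵢ) pᵈⁱ (1-p)^(m-dᵢ)`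
all carry the same factor `(p/(1-p))ˢ (1-p)^(#ι m)`, so the conditional law puts mass
proportional to `∏ i, C(m, dᵢ)` on each composition `d` of `s`, whatever `p` is.
Every weighted sum that occurs is then a coefficient of a product of polynomials:
`(dᵢ)ₑ C(m, dᵢ)` (falling factorial) is the `dᵢ`-th coefficient of
`Xᵉ (d/dX)ᵉ (X+1)ᵐ = (m)ₑ Xᵉ (X+1)^(m-e)`, so
`∑_d ∏ i, (dᵢ)_{eᵢ} C(m, dᵢ) = ∏ i, (m)_{eᵢ} · C(#ι m - ∑ e, s - ∑ e)`.
With `e = 0` this is the normalising constant `C(#ι m, s)`, and the integrand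
`(d₀ - 1) d₀ ∏_{0<i<k} dᵢ` is the falling-factorial product with `e = (2, 1, …, 1, 0, …, 0)`.
-/

open MeasureTheory ProbabilityTheory Polynomial Finset

namespace Polynomial

lemma coeff_prod_eq_sum_piAntidiag {R ι : Type*} [CommSemiring R] [DecidableEq ι]
    (s : Finset ι) (p : ι → R[X]) (n : ℕ) :
    (∏ i ∈ s, p i).coeff n = ∑ d ∈ s.piAntidiag n, ∏ i ∈ s, (p i).coeff (d i) := by
  rw [← coeff_coe, ← coeToPowerSeries.ringHom_apply, map_prod, PowerSeries.coeff_prod]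
  simp [finsuppAntidiag, sum_attach (piAntidiag s n) (fun d => ∏ i ∈ s, (p i).coeff (d i))]

lemma coeff_X_pow_mul_iterate_derivative {R : Type*} [CommSemiring R] (p : R[X]) (k j : ℕ) :
    (X ^ k * derivative^[k] p).coeff j = j.descFactorial k • p.coeff j := by
  rcases le_or_gt k j with hkj | hjk
  · obtain ⟨i, rfl⟩ := Nat.exists_eq_add_of_le' hkj
    rw [coeff_X_pow_mul, coeff_iterate_derivative]
  · rw [coeff_X_pow_mul', if_neg (by omega), Nat.descFactorial_eq_zero_iff_lt.mpr hjk, zero_smul]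

lemma X_pow_mul_iterate_derivative_X_add_one_pow {R : Type*} [CommSemiring R] (k m : ℕ) :
    X ^ k * derivative^[k] ((X + 1 : R[X]) ^ m) =
      C (m.descFactorial k : R) * X ^ k * (X + 1) ^ (m - k) := by
  rw [← C_1, iterate_derivative_X_add_pow, nsmul_eq_mul, ← C_eq_natCast]
  ring

end Polynomial

theorem Nat.sum_piAntidiag_prod_descFactorial_mul_choose {ι : Type*} [Fintype ι]
    [DecidableEq ι] (m n : ℕ) (e : ι → ℕ) (he : ∀ i, e i ≤ m) (hen : ∑ i, e i ≤ n) :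
    ∑ d ∈ piAntidiag univ n, ∏ i, (d i).descFactorial (e i) * m.choose (d i)
      = (∏ i, m.descFactorial (e i)) *
          (Fintype.card ι * m - ∑ i, e i).choose (n - ∑ i, e i) := by
  have hcoeff (i : ι) (j : ℕ) : (X ^ e i * derivative^[e i] ((X + 1 : ℕ[X]) ^ m)).coeff j =
      j.descFactorial (e i) * m.choose j := by
    rw [coeff_X_pow_mul_iterate_derivative, coeff_X_add_one_pow, smul_eq_mul, Nat.cast_id]
  have hexp : ∑ i, (m - e i) = Fintype.card ι * m - ∑ i, e i := by
    rw [sum_tsub_distrib _ fun i _ => he i, sum_const, Finset.card_univ, smul_eq_mul]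
  simp_rw [← hcoeff, ← coeff_prod_eq_sum_piAntidiag, X_pow_mul_iterate_derivative_X_add_one_pow,
    prod_mul_distrib, ← map_prod, prod_pow_eq_pow_sum, hexp, mul_assoc, coeff_C_mul,
    coeff_X_pow_mul', if_pos hen, coeff_X_add_one_pow, Nat.cast_id]

theorem cast_prod_descFactorial_eq_mul_prod {ι : Type*} [Fintype ι] [DecidableEq ι]
    {i₀ : ι} {T : Finset ι} (hi₀ : i₀ ∈ T) (x : ι → ℕ) :
    ((∏ i, (x i).descFactorial ((if i ∈ T then 1 else 0) + (if i = i₀ then 1 else 0)) : ℕ) : ℝ)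
      = ((x i₀ : ℝ) - 1) * ∏ i ∈ T, (x i : ℝ) := by
  have hfactor (i : ι) :
      (((x i).descFactorial ((if i ∈ T then 1 else 0) + (if i = i₀ then 1 else 0)) : ℕ) : ℝ)
        = (if i = i₀ then (x i : ℝ) - 1 else 1) * (if i ∈ T then (x i : ℝ) else 1) := by
    by_cases h : i = i₀
    · subst h
      simp only [hi₀, ↓reduceIte, Nat.reduceAdd, Nat.cast_descFactorial_two]
      ring
    · split_ifs <;> simp
  rw [Nat.cast_prod, prod_congr rfl fun i _ => hfactor i, prod_mul_distrib, prod_ite_eq',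
    if_pos (mem_univ _), prod_ite_mem, univ_inter]

theorem sum_piAntidiag_prod_choose_mul_factorialMoment {ι : Type*} [Fintype ι] [DecidableEq ι]
    {m n : ℕ} (hm : 2 ≤ m) {i₀ : ι} {T : Finset ι} (hi₀ : i₀ ∈ T) (hTn : #T < n) :
    ∑ d ∈ piAntidiag univ n, (∏ i, (m.choose (d i) : ℝ)) * (((d i₀ : ℝ) - 1) * ∏ i ∈ T, (d i : ℝ))
      = (m : ℝ) ^ #T * ((m : ℝ) - 1) *
          (Fintype.card ι * m - #T - 1).choose (n - #T - 1) := by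
  set e : ι → ℕ := fun i => (if i ∈ T then 1 else 0) + (if i = i₀ then 1 else 0)
  have he : ∀ i, e i ≤ m := fun i => by simp only [e]; split_ifs <;> omega
  have hsum_e : ∑ i, e i = #T + 1 := by simp [e, sum_add_distrib]
  have hconst := cast_prod_descFactorial_eq_mul_prod hi₀ fun _ => m
  rw [prod_const] at hconst
  calc _ = ((∑ d ∈ piAntidiag univ n,
          ∏ i, (d i).descFactorial (e i) * m.choose (d i) : ℕ) : ℝ) := by
        push_cast [prod_mul_distrib]
        refine sum_congr rfl fun d _ => ?_
        rw [← cast_prod_descFactorial_eq_mul_prod hi₀ d]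
        push_cast
        ring
    _ = _ := by
      rw [Nat.sum_piAntidiag_prod_descFactorial_mul_choose m n e he (by omega), Nat.cast_mul,
        hconst, hsum_e, ← Nat.sub_sub, ← Nat.sub_sub]
      ring

section Conditioning

variable {Ω : Type*} [MeasurableSpace Ω] {μ : Measure Ω}

theorem measureReal_preimage_singleton_eq_prod_of_iIndepFun {ι β : Type*} [Fintype ι]
    [MeasurableSpace β] [MeasurableSingletonClass β] {D : ι → Ω → β}
    (hindep : iIndepFun D μ) (d : ι → β) :
    μ.real ((fun ω i => D i ω) ⁻¹' {d}) = ∏ i, μ.real {ω | D i ω = d i} := by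
  classical
  have hpre : (fun ω i => D i ω) ⁻¹' {d} = ⋂ i ∈ (univ : Finset ι), D i ⁻¹' {d i} := by
    ext ω; simp [funext_iff]
  rw [hpre, measureReal_def, hindep.measure_inter_preimage_eq_mul _
    fun i _ => measurableSet_singleton (d i), ENNReal.toReal_prod]
  rfl

theorem integral_cond_preimage_finset [IsFiniteMeasure μ] {α : Type*} [MeasurableSpace α]
    [MeasurableSingletonClass α] [Countable α] {V : Ω → α} (hV : Measurable V)
    (S : Finset α) (g : α → ℝ) :
    ∫ ω, g (V ω) ∂μ[|V ⁻¹' S] =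
      (∑ x ∈ S, μ.real (V ⁻¹' {x}) * g x) / ∑ x ∈ S, μ.real (V ⁻¹' {x}) := by
  have hmap (T : Set α) : (μ.map V).real T = μ.real (V ⁻¹' T) :=
    map_measureReal_apply hV T.to_countable.measurableSet
  rw [ProbabilityTheory.cond, integral_smul_measure, ← setIntegral_map S.measurableSet
      (measurable_of_countable g).aestronglyMeasurable hV.aemeasurable,
    setIntegral_finset S .finset, ENNReal.toReal_inv, ← measureReal_def,
    ← hmap, ← sum_measureReal_singleton, smul_eq_mul, inv_mul_eq_div]
  simp_rw [hmap, smul_eq_mul]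

theorem prod_binomial_weight {ι : Type*} [Fintype ι] (m : ℕ) {p : ℝ} (hp : p ≠ 1) (d : ι → ℕ) :
    ∏ i, ((m.choose (d i) : ℝ) * p ^ d i * (1 - p) ^ (m - d i)) =
      (∏ i, (m.choose (d i) : ℝ)) *
        ((p / (1 - p)) ^ (∑ i, d i) * (1 - p) ^ (Fintype.card ι * m)) := by
  have hq : 1 - p ≠ 0 := sub_ne_zero.mpr hp.symm
  have hterm (j : ℕ) : (m.choose j : ℝ) * p ^ j * (1 - p) ^ (m - j) =
      m.choose j * ((p / (1 - p)) ^ j * (1 - p) ^ m) := by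
    rcases le_or_gt j m with hjm | hmj
    · rw [div_pow, div_mul_eq_mul_div, ← Nat.sub_add_cancel hjm, pow_add, Nat.add_sub_cancel]
      field_simp
    · simp [Nat.choose_eq_zero_of_lt hmj]
  simp only [hterm, prod_mul_distrib, prod_pow_eq_pow_sum, sum_const, smul_eq_mul,
    Finset.card_univ]

variable [IsProbabilityMeasure μ] {ι : Type*} [Fintype ι] {m : ℕ} {p : ℝ} {D : ι → Ω → ℕ}

theorem integral_cond_sum_eq_of_iIndepFun_binomial [DecidableEq ι] {s : ℕ}
    (hp₀ : 0 < p) (hp₁ : p < 1) (hmeas : ∀ i, Measurable (D i)) (hindep : iIndepFun D μ)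
    (hdist : ∀ i k, μ {ω | D i ω = k} =
      ENNReal.ofReal ((m.choose k : ℝ) * p ^ k * (1 - p) ^ (m - k)))
    (g : (ι → ℕ) → ℝ) :
    ∫ ω, g (fun i => D i ω) ∂μ[|{ω | ∑ i, D i ω = s}] =
      (∑ d ∈ piAntidiag univ s, (∏ i, (m.choose (d i) : ℝ)) * g d) /
        (Fintype.card ι * m).choose s := by
  set c := (p / (1 - p)) ^ s * (1 - p) ^ (Fintype.card ι * m)
  have hc : c ≠ 0 := by
    have : 0 < 1 - p := by linarith
    positivity
  have hset : {ω | ∑ i, D i ω = s} =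
      (fun ω i => D i ω) ⁻¹' ↑(piAntidiag (univ : Finset ι) s) := by
    ext ω; simp
  have hweight : ∀ d ∈ piAntidiag univ s,
      μ.real ((fun ω i => D i ω) ⁻¹' {d}) = (∏ i, (m.choose (d i) : ℝ)) * c := by
    intro d hd
    rw [measureReal_preimage_singleton_eq_prod_of_iIndepFun hindep]
    simp_rw [measureReal_def, hdist]
    rw [prod_congr rfl fun i _ => ENNReal.toReal_ofReal (by positivity),
      prod_binomial_weight m hp₁.ne, (mem_piAntidiag.mp hd).1]
  have htotal : ∑ d ∈ piAntidiag (univ : Finset ι) s, ∏ i, (m.choose (d i) : ℝ) =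
      (Fintype.card ι * m).choose s := by
    have := Nat.sum_piAntidiag_prod_descFactorial_mul_choose (ι := ι) m s 0 (by simp) (by simp)
    simp only [Pi.zero_apply, Nat.descFactorial_zero, one_mul, prod_const_one, sum_const_zero,
      Nat.sub_zero] at this
    exact_mod_cast this
  rw [hset, integral_cond_preimage_finset (measurable_pi_lambda _ hmeas), sum_congr rfl
    fun d hd => congrArg (· * g d) (hweight d hd), sum_congr rfl hweight, ← sum_mul, htotal]
  simp_rw [mul_right_comm _ c, ← sum_mul]
  exact mul_div_mul_right _ _ hc

theorem measureReal_cond_sum_eq_card_all_eq_one_of_iIndepFun_binomial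
    (hp₀ : 0 < p) (hp₁ : p < 1) (hmeas : ∀ i, Measurable (D i)) (hindep : iIndepFun D μ)
    (hdist : ∀ i k, μ {ω | D i ω = k} =
      ENNReal.ofReal ((m.choose k : ℝ) * p ^ k * (1 - p) ^ (m - k))) :
    (μ[|{ω | ∑ i, D i ω = Fintype.card ι}]).real {ω | ∀ i, D i ω = 1} =
      (m : ℝ) ^ Fintype.card ι / (Fintype.card ι * m).choose (Fintype.card ι) := by
  classical
  have hone : {ω | ∀ i, D i ω = 1} = (fun ω i => D i ω) ⁻¹' {1} := by
    ext ω; simp [funext_iff]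
  have hind : ((fun ω i => D i ω) ⁻¹' {1}).indicator (1 : Ω → ℝ) =
      fun ω => Set.indicator {1} 1 fun i => D i ω := rfl
  have hmem : (1 : ι → ℕ) ∈ piAntidiag univ (Fintype.card ι) := by simp
  rw [hone, ← integral_indicator_one (measurable_pi_lambda _ hmeas (measurableSet_singleton 1)),
    hind, integral_cond_sum_eq_of_iIndepFun_binomial hp₀ hp₁ hmeas hindep hdist]
  simp only [Set.indicator_apply, Set.mem_singleton_iff, Pi.one_apply, mul_ite, mul_one,
    mul_zero, sum_ite_eq', if_pos hmem, Nat.choose_one_right, prod_const, Finset.card_univ]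

end Conditioning

/-- With the anti-preferential-attachment in-degree distribution (i.i.d. `Bin(m, 1/m)`
conditioned to sum to `n`, `m ≥ 2`), the number of cyclic vertices satisfies
`Pr{X_n^m = k} = (k/(n-k)) E((D̂_1-1) D̂_1 ⋯ D̂_k) = (k/(n-k)) m^k (m-1) C(nm-k-1, n-k-1)/C(nm, n)`
for `1 ≤ k < n`, and `Pr{X_n^m = n} = Pr{D̂_i = 1 ∀ i} = m^n / C(nm, n)`. -/
theorem stmt16 {Ω : Type*} [MeasurableSpace Ω] (μ : Measure Ω) [IsProbabilityMeasure μ]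
    (m : ℕ) (hm : 2 ≤ m) (n : ℕ) (hn : 1 ≤ n) (D : Fin n → Ω → ℕ)
    (hmeas : ∀ i, Measurable (D i))
    (hindep : iIndepFun D μ)
    (hdist : ∀ i k, μ {ω | D i ω = k} =
      ENNReal.ofReal ((m.choose k : ℝ) * (1 / m : ℝ) ^ k * (1 - 1 / m : ℝ) ^ (m - k))) :
    (∀ k : ℕ, 1 ≤ k → k < n →
      (k : ℝ) / ((n : ℝ) - k) *
          ∫ ω, (((D ⟨0, by omega⟩ ω : ℝ) - 1) *
              ∏ i ∈ Finset.univ.filter (fun i : Fin n => (i : ℕ) < k), (D i ω : ℝ))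
            ∂(μ[|{ω | ∑ i, D i ω = n}])
        = (k : ℝ) / ((n : ℝ) - k) * (m : ℝ) ^ k * ((m : ℝ) - 1) *
            ((n * m - k - 1).choose (n - k - 1) : ℝ) / ((n * m).choose n : ℝ)) ∧
    ((μ[|{ω | ∑ i, D i ω = n}] {ω | ∀ i, D i ω = 1}).toReal
      = (m : ℝ) ^ n / ((n * m).choose n : ℝ)) := by
  have hm' : (1 : ℝ) < m := by exact_mod_cast hm
  have hp₀ : (0 : ℝ) < 1 / m := by positivity
  have hp₁ : 1 / (m : ℝ) < 1 := (div_lt_one (by positivity)).mpr hm'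
  constructor
  · intro k hk hkn
    set T := univ.filter fun i : Fin n => (i : ℕ) < k
    have hT : #T = k := by simp [T, Fin.card_filter_val_lt]; omega
    rw [integral_cond_sum_eq_of_iIndepFun_binomial hp₀ hp₁ hmeas hindep hdist
        fun d => ((d ⟨0, by omega⟩ : ℝ) - 1) * ∏ i ∈ T, (d i : ℝ),
      sum_piAntidiag_prod_choose_mul_factorialMoment hm (by simp [T]; omega) (by omega), hT,
      Fintype.card_fin]
    ring
  · simpa only [Fintype.card_fin, measureReal_def] using
      measureReal_cond_sum_eq_card_all_eq_one_of_iIndepFun_binomial hp₀ hp₁ hmeas hindep hdist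
end

section
/- For fixed 0 < x < 1 and ℓ = ⌊xn⌋, the quantity C(n,ℓ)·Γ(ℓ(1+ρ))Γ((n-ℓ)(1+ρ))Γ(nρ)/(Γ(ℓρ)Γ((n-ℓ)ρ)Γ(n(1+ρ))) is asymptotic to √(ρ/(1+ρ))·√(n/(2πℓ(n-ℓ))) as n → ∞. -/
/-!
Writing `C(n, ℓ) = n Γ(n) / (ℓ Γ(ℓ) · (n - ℓ) Γ(n - ℓ))`, the quantity becomes a ratio of
Gamma values whose arguments all tend to infinity, so each may be replaced by Stirling's
approximation `√(2π) y^(y - 1/2) e^(-y)`. For real `y` this follows from the factorial case: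
log-convexity of `Γ` together with `log Γ(y + 1) = log Γ(y) + log y` forces the remainder
`log Γ(y) - ((y - 1/2) log y - y)` to move by at most `1 / (2⌊y⌋)` between `⌊y⌋` and `y`.
After the substitution what is left is an exact identity: the terms `y log y` and `y` cancel
because `(1 + ρ) - ρ - 1 = 0`, and only the square-root factors survive.
-/

open Filter Topology Asymptotics Real
open scoped Nat

/-- `√(2π) y ^ (y - 1/2) e ^ (-y)`, in a form whose logarithm needs no side conditions. -/
noncomputable def stirlingApprox (y : ℝ) : ℝ :=
  exp ((y - 1 / 2) * log y - y + log (2 * π) / 2)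

noncomputable def stirlingRemainder (y : ℝ) : ℝ :=
  log (Gamma y) - ((y - 1 / 2) * log y - y)

lemma natCast_factorial_eq_mul_Gamma {k : ℕ} (hk : k ≠ 0) : (k ! : ℝ) = k * Gamma k := by
  rw [← Gamma_nat_eq_factorial, Gamma_add_one (Nat.cast_ne_zero.2 hk)]

lemma stirlingRemainder_natCast {k : ℕ} (hk : k ≠ 0) :
    stirlingRemainder k = log (Stirling.stirlingSeq k) + log 2 / 2 := by
  have hk' : (0 : ℝ) < k := Nat.cast_pos.2 (Nat.pos_of_ne_zero hk)
  have hΓ : 0 < Gamma k := Gamma_pos_of_pos hk'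
  rw [stirlingRemainder, Stirling.stirlingSeq, natCast_factorial_eq_mul_Gamma hk,
    log_div (by positivity) (by positivity),
    log_mul (x := √(2 * k)) (by positivity) (by positivity), log_sqrt (by positivity),
    log_mul two_ne_zero hk'.ne', log_pow,
    log_div hk'.ne' (exp_ne_zero 1), log_exp, log_mul hk'.ne' hΓ.ne']
  ring

lemma tendsto_stirlingRemainder_natCast :
    Tendsto (fun k : ℕ => stirlingRemainder k) atTop (𝓝 (log (2 * π) / 2)) := by
  have hlim : log (2 * π) / 2 = log √π + log 2 / 2 := by
    rw [log_sqrt pi_pos.le, log_mul two_ne_zero pi_pos.ne']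
    ring
  rw [hlim]
  refine (((continuousAt_log (by positivity)).tendsto.comp
    Stirling.tendsto_stirlingSeq_sqrt_pi).add_const _).congr' ?_
  filter_upwards [eventually_ne_atTop 0] with k hk
  exact (stirlingRemainder_natCast hk).symm

lemma log_Gamma_add_le {z t : ℝ} (hz : 0 < z) (ht₀ : 0 ≤ t) (ht₁ : t ≤ 1) :
    log (Gamma (z + t)) ≤ log (Gamma z) + t * log z := by
  have hrec : log (Gamma (z + 1)) = log (Gamma z) + log z := by
    rw [Gamma_add_one hz.ne', log_mul hz.ne' (Gamma_pos_of_pos hz).ne', add_comm]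
  have h := convexOn_log_Gamma.2 (Set.mem_Ioi.2 hz)
    (Set.mem_Ioi.2 (by linarith : 0 < z + 1)) (by linarith : 0 ≤ 1 - t) ht₀ (by ring)
  simp only [Function.comp_apply, smul_eq_mul] at h
  rw [show (1 - t) * z + t * (z + 1) = z + t by ring, hrec] at h
  linarith

lemma abs_stirlingRemainder_sub_le {a y : ℝ} (ha : 1 / 2 ≤ a) (hay : a ≤ y)
    (hya : y ≤ a + 1) :
    |stirlingRemainder y - stirlingRemainder a| ≤ 1 / (2 * a) := by
  have ha₀ : 0 < a := by linarith
  have hy₀ : 0 < y := by linarith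
  have hup : log (Gamma y) ≤ log (Gamma a) + (y - a) * log a := by
    simpa using log_Gamma_add_le ha₀ (sub_nonneg.2 hay) (by linarith : y - a ≤ 1)
  have hlow : log (Gamma (a + 1)) ≤ log (Gamma y) + (a + 1 - y) * log y := by
    simpa using log_Gamma_add_le hy₀ (by linarith : 0 ≤ a + 1 - y)
      (by linarith : a + 1 - y ≤ 1)
  rw [Gamma_add_one ha₀.ne', log_mul ha₀.ne' (Gamma_pos_of_pos ha₀).ne'] at hlow
  have hlog_ay : log a - log y ≤ (a - y) / y := by
    rw [← log_div ha₀.ne' hy₀.ne', sub_div, div_self hy₀.ne']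
    exact log_le_sub_one_of_pos (by positivity)
  have hlog_ya : log y - log a ≤ (y - a) / a := by
    rw [← log_div hy₀.ne' ha₀.ne', sub_div, div_self ha₀.ne']
    exact log_le_sub_one_of_pos (by positivity)
  have hupper : stirlingRemainder y - stirlingRemainder a ≤ (y - a) / (2 * y) := by
    have := mul_le_mul_of_nonneg_left hlog_ay (by linarith : 0 ≤ y - 1 / 2)
    have e : (y - 1 / 2) * ((a - y) / y) + (y - a) = (y - a) / (2 * y) := by field_simp; ring
    unfold stirlingRemainder
    linarith
  have hlower : -((y - a) / (2 * a)) ≤ stirlingRemainder y - stirlingRemainder a := by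
    have := mul_le_mul_of_nonneg_left hlog_ya (by linarith : 0 ≤ a + 1 / 2)
    have e : -((a + 1 / 2) * ((y - a) / a)) + (y - a) = -((y - a) / (2 * a)) := by
      field_simp; ring
    unfold stirlingRemainder
    linarith
  have hy_bound : (y - a) / (2 * y) ≤ 1 / (2 * a) := by
    rw [div_le_div_iff₀ (by positivity) (by positivity)]
    nlinarith
  have ha_bound : (y - a) / (2 * a) ≤ 1 / (2 * a) := by
    gcongr
    linarith
  rw [abs_le]
  constructor <;> linarith

lemma tendsto_stirlingRemainder :
    Tendsto stirlingRemainder atTop (𝓝 (log (2 * π) / 2)) := by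
  have hfloor := tendsto_stirlingRemainder_natCast.comp tendsto_nat_floor_atTop (α := ℝ)
  have hbound : Tendsto (fun y : ℝ => 1 / (2 * (⌊y⌋₊ : ℝ))) atTop (𝓝 0) := by
    simp only [one_div]
    exact ((tendsto_natCast_atTop_atTop.comp
      (tendsto_nat_floor_atTop (α := ℝ))).const_mul_atTop two_pos).inv_tendsto_atTop
  have hdiff : Tendsto (fun y => stirlingRemainder y - stirlingRemainder ⌊y⌋₊) atTop (𝓝 0) := by
    refine squeeze_zero_norm' ?_ hbound
    filter_upwards [eventually_ge_atTop 1] with y hy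
    have h1 : (1 : ℝ) ≤ ⌊y⌋₊ := by exact_mod_cast Nat.le_floor (by exact_mod_cast hy)
    exact abs_stirlingRemainder_sub_le (by linarith) (Nat.floor_le (by linarith))
      (Nat.lt_floor_add_one y).le
  simpa using hdiff.add hfloor

lemma Gamma_isEquivalent_stirlingApprox : Gamma ~[atTop] stirlingApprox := by
  refine isEquivalent_of_tendsto_one ?_
  have h := (continuous_exp.tendsto _).comp
    (tendsto_stirlingRemainder.sub_const (log (2 * π) / 2))
  rw [sub_self, exp_zero] at h
  refine h.congr' ?_
  filter_upwards [eventually_gt_atTop 0] with y hy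
  rw [Function.comp_apply, Pi.div_apply, stirlingApprox, stirlingRemainder,
    ← exp_log (Gamma_pos_of_pos hy), ← exp_sub, log_exp]
  ring_nf

/-- With `f = Γ`, `n` and `a = ℓ` this is the quantity of the theorem, `C(n, ℓ)` expanded via
`k! = k Γ(k)`. -/
noncomputable def binomialGammaRatio (f : ℝ → ℝ) (ρ a n : ℝ) : ℝ :=
  n * f n * f (a * (1 + ρ)) * f ((n - a) * (1 + ρ)) * f (n * ρ) /
    (a * (n - a) * f a * f (n - a) * f (a * ρ) * f ((n - a) * ρ) * f (n * (1 + ρ)))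

lemma binomialGammaRatio_stirlingApprox {ρ a n : ℝ} (hρ : 0 < ρ) (ha : 0 < a) (han : a < n) :
    binomialGammaRatio stirlingApprox ρ a n =
      √(ρ / (1 + ρ)) * √(n / (2 * π * a * (n - a))) := by
  have hn : 0 < n := ha.trans han
  have hb : 0 < n - a := sub_pos.2 han
  have hρ₁ : 0 < 1 + ρ := by linarith
  refine log_injOn_pos (Set.mem_Ioi.2 ?_) (Set.mem_Ioi.2 (by positivity)) ?_
  · unfold binomialGammaRatio stirlingApprox
    positivity
  simp only [binomialGammaRatio, stirlingApprox]
  rw [log_div (by positivity) (by positivity), log_mul (x := √_) (by positivity) (by positivity),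
    log_sqrt (by positivity), log_sqrt (by positivity)]
  simp only [log_mul, log_div, log_exp, ne_eq, mul_eq_zero, exp_ne_zero, hn.ne', ha.ne', hb.ne',
    hρ.ne', hρ₁.ne', pi_ne_zero, two_ne_zero, or_self, not_false_eq_true]
  ring

lemma Asymptotics.IsEquivalent.binomialGammaRatio {α : Type*} {L : Filter α} {f g : ℝ → ℝ}
    (hfg : f ~[atTop] g) {ρ : ℝ} (hρ : 0 < ρ) {a n : α → ℝ} (ha : Tendsto a L atTop)
    (hb : Tendsto (fun t => n t - a t) L atTop) :
    (fun t => binomialGammaRatio f ρ (a t) (n t)) ~[L]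
      fun t => binomialGammaRatio g ρ (a t) (n t) := by
  have hρ₁ : 0 < 1 + ρ := by linarith
  have hn : Tendsto n L atTop := by simpa using ha.atTop_add_atTop hb
  have h {u : α → ℝ} (hu : Tendsto u L atTop) : f ∘ u ~[L] g ∘ u := hfg.comp_tendsto hu
  exact ((((IsEquivalent.refl.mul (h hn)).mul (h (ha.atTop_mul_const hρ₁))).mul
    (h (hb.atTop_mul_const hρ₁))).mul (h (hn.atTop_mul_const hρ))).div
    ((((((IsEquivalent.refl.mul IsEquivalent.refl).mul (h ha)).mul (h hb)).mul
      (h (ha.atTop_mul_const hρ))).mul (h (hb.atTop_mul_const hρ))).mul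
      (h (hn.atTop_mul_const hρ₁)))

lemma tendsto_binomialGammaRatio_Gamma_div {α : Type*} {L : Filter α} {ρ : ℝ} (hρ : 0 < ρ)
    {a n : α → ℝ} (ha : Tendsto a L atTop) (hb : Tendsto (fun t => n t - a t) L atTop) :
    Tendsto (fun t => binomialGammaRatio Gamma ρ (a t) (n t) /
      (√(ρ / (1 + ρ)) * √(n t / (2 * π * a t * (n t - a t))))) L (𝓝 1) := by
  have hpos : ∀ᶠ t in L, 0 < a t ∧ a t < n t := by
    filter_upwards [ha.eventually_gt_atTop 0, hb.eventually_gt_atTop 0] with t h₁ h₂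
    exact ⟨h₁, sub_pos.1 h₂⟩
  refine (isEquivalent_iff_tendsto_one ?_).1
    ((Gamma_isEquivalent_stirlingApprox.binomialGammaRatio hρ ha hb).congr_right ?_)
  · filter_upwards [hpos] with t ⟨h₁, h₂⟩
    have hb₀ : 0 < n t - a t := sub_pos.2 h₂
    exact mul_ne_zero (by positivity) (sqrt_ne_zero'.2 (div_pos (h₁.trans h₂) (by positivity)))
  · filter_upwards [hpos] with t ⟨h₁, h₂⟩
    exact binomialGammaRatio_stirlingApprox hρ h₁ h₂

lemma natCast_choose_eq_Gamma {n k : ℕ} (hk : k ≠ 0) (hkn : k < n) :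
    (n.choose k : ℝ) = n * Gamma n / (k * Gamma k * ((n - k) * Gamma (n - k))) := by
  rw [Nat.cast_choose ℝ hkn.le, natCast_factorial_eq_mul_Gamma (by omega),
    natCast_factorial_eq_mul_Gamma hk, natCast_factorial_eq_mul_Gamma (by omega),
    Nat.cast_sub hkn.le]

/-- For fixed `ρ > 0` and `0 < x < 1`, with `ℓ = ⌊xn⌋`, the quantity
`C(n,ℓ) Γ(ℓ(1+ρ)) Γ((n-ℓ)(1+ρ)) Γ(nρ) / (Γ(ℓρ) Γ((n-ℓ)ρ) Γ(n(1+ρ)))` is asymptotic to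
`√(ρ/(1+ρ)) √(n/(2πℓ(n-ℓ)))` as `n → ∞`. -/
theorem stmt19 (ρ : ℝ) (hρ : 0 < ρ) (x : ℝ) (hx1 : 0 < x) (hx2 : x < 1) :
    Tendsto (fun n : ℕ =>
        ((fun l : ℕ =>
          ((n.choose l : ℝ) * Real.Gamma ((l : ℝ) * (1 + ρ)) *
              Real.Gamma (((n : ℝ) - l) * (1 + ρ)) * Real.Gamma ((n : ℝ) * ρ) /
            (Real.Gamma ((l : ℝ) * ρ) * Real.Gamma (((n : ℝ) - l) * ρ) *
              Real.Gamma ((n : ℝ) * (1 + ρ)))) /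
          (Real.sqrt (ρ / (1 + ρ)) *
            Real.sqrt ((n : ℝ) / (2 * Real.pi * l * ((n : ℝ) - l)))))) ⌊x * n⌋₊)
      atTop (nhds 1) := by
  have hn : Tendsto (fun n : ℕ => (n : ℝ)) atTop atTop := tendsto_natCast_atTop_atTop
  have hl : Tendsto (fun n : ℕ => (⌊x * n⌋₊ : ℝ)) atTop atTop :=
    tendsto_natCast_atTop_atTop.comp (tendsto_nat_floor_atTop.comp (hn.const_mul_atTop hx1))
  have hm : Tendsto (fun n : ℕ => (n : ℝ) - ⌊x * n⌋₊) atTop atTop := by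
    refine tendsto_atTop_mono (fun n => ?_) (hn.const_mul_atTop (sub_pos.2 hx2))
    have := Nat.floor_le (by positivity : 0 ≤ x * n)
    linarith
  refine (tendsto_binomialGammaRatio_Gamma_div hρ hl hm).congr' ?_
  filter_upwards [hl.eventually_gt_atTop 0, hm.eventually_gt_atTop 0] with n hl₀ hm₀
  have hlpos : ⌊x * n⌋₊ ≠ 0 := by exact_mod_cast hl₀.ne'
  have hln : ⌊x * n⌋₊ < n := by exact_mod_cast sub_pos.1 hm₀
  rw [binomialGammaRatio, natCast_choose_eq_Gamma hlpos hln]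
  generalize (n : ℝ) - ⌊x * n⌋₊ = m
  ring
end
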